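/- (Ahlfors–Schwarz lemma on the polydisc.) Let R > 0, m ≥ 1, c > 0, and let D = {w ∈ ℂ^m : |w_i| < R for all i}. Let ψ(w) = Π_{i=1}^m (1 − |w_i|²/R²)^{−2}. Suppose f : D → ℝ is a bounded, twice continuously differentiable function with f > 0 on D, satisfying the differential inequality Δ(log f) ≥ c·f pointwise on D. Then f(w) ≤ (8m/(cR²))·ψ(w) for all w ∈ D; in particular f(0) ≤ 8m/(cR²). -/

import Mathlib

open Filter Topology

section AuxCalc

lemma my_diffAt_deriv {φ : ℝ → ℝ} {x : ℝ} (h : ContDiffAt ℝ 2 φ x) :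
    DifferentiableAt ℝ (deriv φ) x := by
  have h1 : ContDiffAt ℝ 1 (fderiv ℝ φ) x := h.fderiv_right (by norm_num)
  have h2 : DifferentiableAt ℝ (fderiv ℝ φ) x := h1.differentiableAt (by norm_num)
  have : deriv φ = fun y => (ContinuousLinearMap.apply ℝ ℝ (1:ℝ)) (fderiv ℝ φ y) := by
    funext y; rfl
  rw [this]
  exact ((ContinuousLinearMap.apply ℝ ℝ (1:ℝ)).differentiableAt).comp x h2

lemma my_secondDeriv_nonpos_of_localMax {φ : ℝ → ℝ} (h2 : ContDiffAt ℝ 2 φ 0)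
    (hmax : IsLocalMax φ 0) : deriv (deriv φ) 0 ≤ 0 := by
  by_contra hlt
  push_neg at hlt
  set d := deriv (deriv φ) 0 with hd
  have hφ'0 : deriv φ 0 = 0 := hmax.deriv_eq_zero
  have hdd : HasDerivAt (deriv φ) d 0 := by
    have := my_diffAt_deriv h2
    simpa [hd] using this.hasDerivAt
  have hslope := hasDerivAt_iff_tendsto_slope.mp hdd
  have hpos : ∀ᶠ t in 𝓝[>] (0:ℝ), 0 < deriv φ t := by
    have h1 : ∀ᶠ t in 𝓝[≠] (0:ℝ), 0 < slope (deriv φ) 0 t :=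
      hslope.eventually (eventually_gt_nhds hlt)
    have h2' : ∀ᶠ t in 𝓝[>] (0:ℝ), 0 < slope (deriv φ) 0 t :=
      h1.filter_mono (nhdsWithin_mono 0 fun t ht => ne_of_gt ht)
    filter_upwards [h2', self_mem_nhdsWithin] with t ht ht0
    have hts : slope (deriv φ) 0 t = deriv φ t / t := by
      simp [slope, hφ'0, vsub_eq_sub, div_eq_inv_mul]
    rw [hts] at ht
    have := mul_pos ht (show (0:ℝ) < t from ht0)
    rwa [div_mul_cancel₀ _ (ne_of_gt ht0)] at this
  have hcd : ∀ᶠ t in 𝓝 (0:ℝ), ContDiffAt ℝ 2 φ t := h2.eventually (by norm_num)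
  have hmax' : ∀ᶠ t in 𝓝 (0:ℝ), φ t ≤ φ 0 := hmax
  obtain ⟨ε1, hε1, H1⟩ := Metric.eventually_nhds_iff.mp (hcd.and hmax')
  rw [eventually_nhdsWithin_iff] at hpos
  obtain ⟨ε2, hε2, H2⟩ := Metric.eventually_nhds_iff.mp hpos
  set ε := min ε1 ε2 / 2 with hε
  have hεpos : 0 < ε := by positivity
  have hεlt1 : ε < ε1 := by
    have h := min_le_left ε1 ε2
    simp only [hε]; linarith
  have hεlt2 : ε < ε2 := by
    have h := min_le_right ε1 ε2
    simp only [hε]; linarith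
  have hmono : StrictMonoOn φ (Set.Icc 0 ε) := by
    apply strictMonoOn_of_deriv_pos (convex_Icc 0 ε)
    · intro t ht
      have hdist : dist t 0 < ε1 := by
        rw [Real.dist_eq, sub_zero, abs_of_nonneg ht.1]
        exact lt_of_le_of_lt ht.2 hεlt1
      exact ((H1 hdist).1.continuousAt).continuousWithinAt
    · intro t ht
      rw [interior_Icc] at ht
      have : dist t 0 < ε2 := by
        rw [Real.dist_eq, sub_zero, abs_of_pos ht.1]
        exact lt_trans ht.2 hεlt2
      exact H2 this ht.1
  have hlt' : φ 0 < φ ε := hmono ⟨le_rfl, le_of_lt hεpos⟩ ⟨le_of_lt hεpos, le_rfl⟩ hεpos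
  have : φ ε ≤ φ 0 := by
    have : dist ε 0 < ε1 := by
      rw [Real.dist_eq, sub_zero, abs_of_pos hεpos]; exact hεlt1
    exact (H1 this).2
  linarith

lemma my_deriv2_add {φ χ : ℝ → ℝ} (hφ : ContDiffAt ℝ 2 φ 0) (hχ : ContDiffAt ℝ 2 χ 0) :
    deriv (deriv (fun t => φ t + χ t)) 0 = deriv (deriv φ) 0 + deriv (deriv χ) 0 := by
  have h1 : deriv (fun t => φ t + χ t) =ᶠ[𝓝 (0:ℝ)] fun t => deriv φ t + deriv χ t := by
    filter_upwards [hφ.eventually (by norm_num), hχ.eventually (by norm_num)] with t h1 h2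
    exact deriv_add (h1.differentiableAt (by norm_num)) (h2.differentiableAt (by norm_num))
  rw [h1.deriv_eq]
  exact deriv_add (my_diffAt_deriv hφ) (my_diffAt_deriv hχ)

/-- second derivative of `t ↦ -2 log(1 - ((x+t)^2+y^2)/R^2)` at `0`. -/
lemma my_deriv2_q (R x y : ℝ) (hR : 0 < R) (h : x ^ 2 + y ^ 2 < R ^ 2) :
    deriv (deriv (fun t : ℝ => -2 * Real.log (1 - ((x + t) ^ 2 + y ^ 2) / R ^ 2))) 0
      = (4 * (R ^ 2 * (1 - (x ^ 2 + y ^ 2) / R ^ 2)) + 8 * x ^ 2)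
        / (R ^ 2 * (1 - (x ^ 2 + y ^ 2) / R ^ 2)) ^ 2 := by
  have hR2 : (0:ℝ) < R ^ 2 := by positivity
  set a : ℝ → ℝ := fun t => 1 - ((x + t) ^ 2 + y ^ 2) / R ^ 2 with ha
  have haderiv : ∀ t : ℝ, HasDerivAt a (-(2 * (x + t)) / R ^ 2) t := by
    intro t
    have h1 : HasDerivAt (fun t : ℝ => (x + t) ^ 2 + y ^ 2) (2 * (x + t)) t := by
      have : HasDerivAt (fun t : ℝ => x + t) 1 t := (hasDerivAt_id t).const_add x
      simpa using (this.pow 2).add_const (y ^ 2)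
    have h2 := (h1.div_const (R ^ 2)).const_sub 1
    refine h2.congr_deriv ?_
    ring
  have hq : ∀ t : ℝ, 0 < a t →
      HasDerivAt (fun t : ℝ => -2 * Real.log (1 - ((x + t) ^ 2 + y ^ 2) / R ^ 2))
        (4 * (x + t) / (R ^ 2 * a t)) t := by
    intro t hat
    have h1 : HasDerivAt (fun t => Real.log (a t)) (-(2 * (x + t)) / R ^ 2 / a t) t :=
      (haderiv t).log (ne_of_gt hat)
    have h2 := h1.const_mul (-2 : ℝ)
    refine h2.congr_deriv ?_
    ring
  have ha0 : 0 < a 0 := by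
    simp only [ha]
    have : (x + 0) ^ 2 + y ^ 2 < R ^ 2 := by simpa using h
    rw [sub_pos]
    exact (div_lt_one hR2).mpr this
  have hopen : ∀ᶠ t in 𝓝 (0:ℝ), 0 < a t := by
    have hc : Continuous a := by fun_prop
    exact continuousAt_const.eventually_lt hc.continuousAt ha0
  have hev : deriv (fun t : ℝ => -2 * Real.log (1 - ((x + t) ^ 2 + y ^ 2) / R ^ 2))
      =ᶠ[𝓝 (0:ℝ)] fun t => 4 * (x + t) / (R ^ 2 * a t) := by
    filter_upwards [hopen] with t ht
    exact (hq t ht).deriv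
  rw [hev.deriv_eq]
  have hnum : HasDerivAt (fun t : ℝ => 4 * (x + t)) 4 0 := by
    have : HasDerivAt (fun t : ℝ => x + t) 1 0 := (hasDerivAt_id 0).const_add x
    simpa using this.const_mul 4
  have hden : HasDerivAt (fun t : ℝ => R ^ 2 * a t) (R ^ 2 * (-(2 * (x + 0)) / R ^ 2)) 0 :=
    (haderiv 0).const_mul (R ^ 2)
  have hden0 : R ^ 2 * a 0 ≠ 0 := by positivity
  have := (hnum.div hden hden0).deriv
  change deriv ((fun t => 4 * (x + t)) / fun t => R ^ 2 * a t) 0 = _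
  rw [this]
  have ha00 : a 0 = 1 - (x ^ 2 + y ^ 2) / R ^ 2 := by simp [ha]
  rw [ha00]
  congr 1
  have hRne : (R:ℝ) ≠ 0 := ne_of_gt hR
  field_simp
  ring

lemma my_contDiff_normSq : ContDiff ℝ 2 Complex.normSq := by
  have : (Complex.normSq : ℂ → ℝ) = fun z => z.re * z.re + z.im * z.im :=
    funext fun z => Complex.normSq_apply z
  rw [this]
  have hre : ContDiff ℝ 2 fun z : ℂ => z.re := Complex.reCLM.contDiff
  have him : ContDiff ℝ 2 fun z : ℂ => z.im := Complex.imCLM.contDiff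
  exact (hre.mul hre).add (him.mul him)

end AuxCalc

/-- The Euclidean Laplacian of a function `g : ℂ^m → ℝ`, where `ℂ^m` is identified with
`ℝ^{2m}`: the sum, over the `2m` real coordinate directions `e_i` and `i·e_i`, of the second
directional derivatives. -/
noncomputable def lap {m : ℕ} (g : (Fin m → ℂ) → ℝ) (w : Fin m → ℂ) : ℝ :=
  ∑ i : Fin m,
    (fderiv ℝ (fun v => fderiv ℝ g v (Pi.single i 1)) w (Pi.single i 1)
      + fderiv ℝ (fun v => fderiv ℝ g v (Pi.single i Complex.I)) w (Pi.single i Complex.I))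

section AuxLap

variable {m : ℕ} {R : ℝ}

lemma my_line_hasDerivAt (w e : Fin m → ℂ) (t : ℝ) :
    HasDerivAt (fun t : ℝ => w + t • e) e t := by
  have h1 : HasDerivAt (fun t : ℝ => t • e) ((1:ℝ) • e) t :=
    (hasDerivAt_id t).smul_const e
  simpa using h1.const_add w

lemma my_contDiff_line (w e : Fin m → ℂ) :
    ContDiff ℝ 2 (fun t : ℝ => w + t • e) :=
  contDiff_const.add (contDiff_id.smul contDiff_const)

lemma my_fderiv2_line {g : (Fin m → ℂ) → ℝ} {w : Fin m → ℂ} (e : Fin m → ℂ)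
    (hg : ContDiffAt ℝ 2 g w) :
    fderiv ℝ (fun v => fderiv ℝ g v e) w e
      = deriv (deriv (fun t : ℝ => g (w + t • e))) 0 := by
  have hline : ∀ t : ℝ, HasDerivAt (fun s : ℝ => w + s • e) e t := my_line_hasDerivAt w e
  have hcont : Tendsto (fun t : ℝ => w + t • e) (𝓝 0) (𝓝 w) := by
    have : Continuous fun t : ℝ => w + t • e := by continuity
    simpa using this.tendsto 0
  have hev : ∀ᶠ t in 𝓝 (0:ℝ), ContDiffAt ℝ 2 g (w + t • e) :=
    hcont.eventually (hg.eventually (by norm_num))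
  have h1 : deriv (fun t : ℝ => g (w + t • e)) =ᶠ[𝓝 (0:ℝ)]
      fun t => fderiv ℝ g (w + t • e) e := by
    filter_upwards [hev] with t ht
    have hdg : DifferentiableAt ℝ g (w + t • e) := ht.differentiableAt (by norm_num)
    exact (hdg.hasFDerivAt.comp_hasDerivAt t (hline t)).deriv
  rw [h1.deriv_eq]
  have hF : DifferentiableAt ℝ (fun v => fderiv ℝ g v e) w := by
    have h2 : DifferentiableAt ℝ (fderiv ℝ g) w :=
      (hg.fderiv_right (m := 1) (by norm_num)).differentiableAt (by norm_num)
    exact ((ContinuousLinearMap.apply ℝ ℝ e).differentiableAt).comp w h2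
  have h0 : w + (0:ℝ) • e = w := by simp
  have hF' : HasFDerivAt (fun v => fderiv ℝ g v e)
      (fderiv ℝ (fun v => fderiv ℝ g v e) w) (w + (0:ℝ) • e) := h0.symm ▸ hF.hasFDerivAt
  have := (hF'.comp_hasDerivAt 0 (hline 0))
  simpa [Function.comp_def] using this.deriv.symm

lemma my_lap_eq {g : (Fin m → ℂ) → ℝ} {w : Fin m → ℂ} (hg : ContDiffAt ℝ 2 g w) :
    lap g w = ∑ i : Fin m,
      (deriv (deriv (fun t : ℝ => g (w + t • (Pi.single i (1:ℂ) : Fin m → ℂ)))) 0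
        + deriv (deriv (fun t : ℝ => g (w + t • (Pi.single i Complex.I : Fin m → ℂ)))) 0) := by
  unfold lap
  refine Finset.sum_congr rfl fun i _ => ?_
  rw [my_fderiv2_line _ hg, my_fderiv2_line _ hg]

noncomputable def Lfun (R : ℝ) (m : ℕ) : (Fin m → ℂ) → ℝ := fun v =>
  ∑ j : Fin m, (-2) * Real.log (1 - Complex.normSq (v j) / R ^ 2)

lemma my_contDiffAt_Lfun (hR : 0 < R) {w : Fin m → ℂ}
    (hw : ∀ j, Complex.normSq (w j) < R ^ 2) : ContDiffAt ℝ 2 (Lfun R m) w := by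
  apply ContDiffAt.sum
  intro j _
  refine contDiffAt_const.mul ?_
  apply ContDiffAt.log
  · exact ((contDiff_const.sub ((my_contDiff_normSq.comp (contDiff_apply ℝ ℂ j)).div_const
      (R ^ 2)))).contDiffAt
  · have h1 : Complex.normSq (w j) / R ^ 2 < 1 := by
      rw [div_lt_one (by positivity)]; exact hw j
    linarith

lemma my_line_single_one (w : Fin m → ℂ) (i : Fin m) :
    (fun t : ℝ => Lfun R m (w + t • (Pi.single i (1:ℂ) : Fin m → ℂ)))
      = fun t : ℝ => -2 * Real.log (1 - (((w i).re + t) ^ 2 + (w i).im ^ 2) / R ^ 2)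
          + ∑ j ∈ Finset.univ.erase i, (-2) * Real.log (1 - Complex.normSq (w j) / R ^ 2) := by
  funext t
  unfold Lfun
  rw [← Finset.add_sum_erase _ _ (Finset.mem_univ i)]
  congr 1
  · have : (w + t • (Pi.single i (1:ℂ) : Fin m → ℂ)) i = w i + (t : ℂ) := by
      simp [Complex.real_smul]
    rw [this]
    congr 2
    rw [Complex.normSq_apply]
    simp
    ring
  · apply Finset.sum_congr rfl
    intro j hj
    have hji : j ≠ i := Finset.ne_of_mem_erase hj
    have : (w + t • (Pi.single i (1:ℂ) : Fin m → ℂ)) j = w j := by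
      simp [Pi.single_eq_of_ne hji]
    rw [this]

lemma my_line_single_I (w : Fin m → ℂ) (i : Fin m) :
    (fun t : ℝ => Lfun R m (w + t • (Pi.single i Complex.I : Fin m → ℂ)))
      = fun t : ℝ => -2 * Real.log (1 - ((((w i).im + t)) ^ 2 + (w i).re ^ 2) / R ^ 2)
          + ∑ j ∈ Finset.univ.erase i, (-2) * Real.log (1 - Complex.normSq (w j) / R ^ 2) := by
  funext t
  unfold Lfun
  rw [← Finset.add_sum_erase _ _ (Finset.mem_univ i)]
  congr 1
  · have : (w + t • (Pi.single i Complex.I : Fin m → ℂ)) i = w i + t • Complex.I := by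
      simp
    rw [this]
    congr 2
    rw [Complex.normSq_apply]
    simp [Complex.add_re, Complex.add_im, Complex.smul_re, Complex.smul_im]
    ring
  · apply Finset.sum_congr rfl
    intro j hj
    have hji : j ≠ i := Finset.ne_of_mem_erase hj
    have : (w + t • (Pi.single i Complex.I : Fin m → ℂ)) j = w j := by
      simp [Pi.single_eq_of_ne hji]
    rw [this]

lemma my_lap_Lfun (hR : 0 < R) {w : Fin m → ℂ}
    (hw : ∀ j, Complex.normSq (w j) < R ^ 2) :
    lap (Lfun R m) w
      = ∑ i : Fin m, 8 / (R ^ 2 * (1 - Complex.normSq (w i) / R ^ 2) ^ 2) := by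
  rw [my_lap_eq (my_contDiffAt_Lfun hR hw)]
  refine Finset.sum_congr rfl fun i _ => ?_
  set x := (w i).re with hx
  set y := (w i).im with hy
  have hxy : x ^ 2 + y ^ 2 < R ^ 2 := by
    have := hw i
    rw [Complex.normSq_apply] at this
    simpa [hx, hy, pow_two] using this
  have hyx : y ^ 2 + x ^ 2 < R ^ 2 := by linarith
  rw [my_line_single_one w i, my_line_single_I w i]
  have hc1 : deriv (deriv (fun t : ℝ =>
      -2 * Real.log (1 - ((x + t) ^ 2 + y ^ 2) / R ^ 2)
        + ∑ j ∈ Finset.univ.erase i, (-2) * Real.log (1 - Complex.normSq (w j) / R ^ 2))) 0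
      = deriv (deriv (fun t : ℝ => -2 * Real.log (1 - ((x + t) ^ 2 + y ^ 2) / R ^ 2))) 0 := by
    have : (deriv fun t : ℝ =>
        -2 * Real.log (1 - ((x + t) ^ 2 + y ^ 2) / R ^ 2)
          + ∑ j ∈ Finset.univ.erase i, (-2) * Real.log (1 - Complex.normSq (w j) / R ^ 2))
        = deriv fun t : ℝ => -2 * Real.log (1 - ((x + t) ^ 2 + y ^ 2) / R ^ 2) := by
      funext t
      exact deriv_add_const _
    rw [this]
  have hc2 : deriv (deriv (fun t : ℝ =>
      -2 * Real.log (1 - ((y + t) ^ 2 + x ^ 2) / R ^ 2)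
        + ∑ j ∈ Finset.univ.erase i, (-2) * Real.log (1 - Complex.normSq (w j) / R ^ 2))) 0
      = deriv (deriv (fun t : ℝ => -2 * Real.log (1 - ((y + t) ^ 2 + x ^ 2) / R ^ 2))) 0 := by
    have : (deriv fun t : ℝ =>
        -2 * Real.log (1 - ((y + t) ^ 2 + x ^ 2) / R ^ 2)
          + ∑ j ∈ Finset.univ.erase i, (-2) * Real.log (1 - Complex.normSq (w j) / R ^ 2))
        = deriv fun t : ℝ => -2 * Real.log (1 - ((y + t) ^ 2 + x ^ 2) / R ^ 2) := by
      funext t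
      exact deriv_add_const _
    rw [this]
  rw [hc1, hc2, my_deriv2_q R x y hR hxy, my_deriv2_q R y x hR hyx]
  have hnorm : Complex.normSq (w i) = x ^ 2 + y ^ 2 := by
    rw [Complex.normSq_apply]; ring
  rw [hnorm]
  have hA : 0 < 1 - (x ^ 2 + y ^ 2) / R ^ 2 := by
    have h1 : (x ^ 2 + y ^ 2) / R ^ 2 < 1 := by
      rw [div_lt_one (by positivity)]; exact hxy
    linarith
  have hRne : (R:ℝ) ≠ 0 := ne_of_gt hR
  have hcomm : (1 : ℝ) - (y ^ 2 + x ^ 2) / R ^ 2 = 1 - (x ^ 2 + y ^ 2) / R ^ 2 := by ring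
  rw [hcomm, ← add_div]
  have hnumer : 4 * (R ^ 2 * (1 - (x ^ 2 + y ^ 2) / R ^ 2)) + 8 * x ^ 2
      + (4 * (R ^ 2 * (1 - (x ^ 2 + y ^ 2) / R ^ 2)) + 8 * y ^ 2) = 8 * R ^ 2 := by
    field_simp
    ring
  rw [hnumer, mul_pow]
  rw [div_eq_div_iff (by positivity) (by positivity)]
  ring

end AuxLap

set_option maxHeartbeats 1000000 in
/-- Ahlfors–Schwarz lemma on the polydisc: if `f > 0` is bounded, twice continuously
differentiable on the polydisc `D` of radius `R` in `ℂ^m`, and satisfies `Δ(log f) ≥ c f`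
on `D`, then `f ≤ (8m/(cR²)) ψ` on `D`, where `ψ(w) = ∏ i (1 - |w_i|²/R²)⁻²`; in particular
`f(0) ≤ 8m/(cR²)`. -/
theorem stmt4 (R : ℝ) (hR : 0 < R) (m : ℕ) (hm : 1 ≤ m) (c : ℝ) (hc : 0 < c)
    (D : Set (Fin m → ℂ)) (hD : D = {w | ∀ i, ‖w i‖ < R})
    (ψ : (Fin m → ℂ) → ℝ)
    (hψ : ∀ w, ψ w = ∏ i : Fin m, (1 - ‖w i‖ ^ 2 / R ^ 2)⁻¹ ^ 2)
    (f : (Fin m → ℂ) → ℝ)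
    (hbdd : ∃ M : ℝ, ∀ w ∈ D, f w ≤ M)
    (hf : ContDiffOn ℝ 2 f D)
    (hpos : ∀ w ∈ D, 0 < f w)
    (hineq : ∀ w ∈ D, c * f w ≤ lap (fun v => Real.log (f v)) w) :
    (∀ w ∈ D, f w ≤ (8 * m / (c * R ^ 2)) * ψ w) ∧ f 0 ≤ 8 * m / (c * R ^ 2) := by
  have hR2 : (0:ℝ) < R ^ 2 := by positivity
  have hDopen : IsOpen D := by
    rw [hD]
    have hset : {w : Fin m → ℂ | ∀ i, ‖w i‖ < R}
        = ⋂ i, {w : Fin m → ℂ | ‖w i‖ < R} := by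
      ext w; simp
    rw [hset]
    exact isOpen_iInter_of_finite fun i =>
      isOpen_lt (continuous_norm.comp (continuous_apply i)) continuous_const
  -- normSq bounds on D
  have hnq : ∀ w ∈ D, ∀ i, Complex.normSq (w i) < R ^ 2 := by
    intro w hw i
    rw [hD] at hw
    have h1 : ‖w i‖ ^ 2 < R ^ 2 :=
      pow_lt_pow_left₀ (hw i) (norm_nonneg _) (by norm_num)
    rwa [Complex.sq_norm] at h1
  have haD : ∀ w ∈ D, ∀ i, 0 < 1 - Complex.normSq (w i) / R ^ 2 := by
    intro w hw i
    have := hnq w hw i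
    have h1 : Complex.normSq (w i) / R ^ 2 < 1 := by rw [div_lt_one hR2]; exact this
    linarith
  have haD1 : ∀ w ∈ D, ∀ i, 1 - Complex.normSq (w i) / R ^ 2 ≤ 1 := by
    intro w hw i
    have h0 : 0 ≤ Complex.normSq (w i) := Complex.normSq_nonneg _
    have : 0 ≤ Complex.normSq (w i) / R ^ 2 := by positivity
    linarith
  -- the comparison function P = 1/ψ
  set P : (Fin m → ℂ) → ℝ := fun v => ∏ i : Fin m, (1 - Complex.normSq (v i) / R ^ 2) ^ 2
    with hP
  have hψ' : ∀ w, ψ w = ∏ i : Fin m, (1 - Complex.normSq (w i) / R ^ 2)⁻¹ ^ 2 := by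
    intro w
    rw [hψ w]
    exact Finset.prod_congr rfl fun i _ => by rw [Complex.sq_norm]
  have hPpos : ∀ w ∈ D, 0 < P w := by
    intro w hw
    exact Finset.prod_pos fun i _ => pow_pos (haD w hw i) 2
  have hψpos : ∀ w ∈ D, 0 < ψ w := by
    intro w hw
    rw [hψ' w]
    exact Finset.prod_pos fun i _ => pow_pos (inv_pos.mpr (haD w hw i)) 2
  have hψP : ∀ w ∈ D, ψ w * P w = 1 := by
    intro w hw
    rw [hψ' w, hP, ← Finset.prod_mul_distrib]
    apply Finset.prod_eq_one
    intro i _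
    rw [← mul_pow, inv_mul_cancel₀ (ne_of_gt (haD w hw i)), one_pow]
  -- g = log f - Lfun is log of u = f * P on D
  set g : (Fin m → ℂ) → ℝ := fun v => Real.log (f v) - Lfun R m v with hg
  have hgu : ∀ v ∈ D, g v = Real.log (f v * P v) := by
    intro v hv
    rw [Real.log_mul (ne_of_gt (hpos v hv)) (ne_of_gt (hPpos v hv))]
    have hlogP : Real.log (P v) = ∑ i : Fin m, 2 * Real.log (1 - Complex.normSq (v i) / R ^ 2) := by
      rw [hP, Real.log_prod fun i _ => pow_ne_zero 2 (ne_of_gt (haD v hv i))]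
      exact Finset.sum_congr rfl fun i _ => by
        rw [Real.log_pow]; push_cast; ring
    have hLv : Lfun R m v = -Real.log (P v) := by
      rw [hlogP, Lfun, ← Finset.sum_neg_distrib]
      exact Finset.sum_congr rfl fun i _ => by ring
    rw [hg]
    simp only [hLv]
    ring
  -- boundedness setup
  obtain ⟨M, hM⟩ := hbdd
  have h0D : (0 : Fin m → ℂ) ∈ D := by
    rw [hD]; intro i; simpa using hR
  have hf0 : 0 < f 0 := hpos 0 h0D
  have hM0 : 0 < M := lt_of_lt_of_le hf0 (hM 0 h0D)
  set ε := f 0 / M with hεdef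
  have hε0 : 0 < ε := div_pos hf0 hM0
  have hε1 : ε ≤ 1 := (div_le_one hM0).mpr (hM 0 h0D)
  have hsε0 : 0 < Real.sqrt ε := Real.sqrt_pos.mpr hε0
  have hsε1 : Real.sqrt ε ≤ 1 := by
    rw [show (1:ℝ) = Real.sqrt 1 from Real.sqrt_one.symm]
    exact Real.sqrt_le_sqrt hε1
  have hin0 : 0 ≤ 1 - Real.sqrt ε / 2 := by linarith
  set r := R * Real.sqrt (1 - Real.sqrt ε / 2) with hrdef
  have hr0 : 0 ≤ r := by positivity
  have hrR : r < R := by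
    have h1 : Real.sqrt (1 - Real.sqrt ε / 2) < 1 := by
      nlinarith [Real.sq_sqrt hin0, Real.sqrt_nonneg (1 - Real.sqrt ε / 2)]
    calc r = R * Real.sqrt (1 - Real.sqrt ε / 2) := hrdef
    _ < R * 1 := by exact mul_lt_mul_of_pos_left h1 hR
    _ = R := mul_one R
  have hr2 : 1 - r ^ 2 / R ^ 2 = Real.sqrt ε / 2 := by
    rw [hrdef, mul_pow, Real.sq_sqrt hin0]
    field_simp
    ring
  -- the compact exhaustion piece
  set K : Set (Fin m → ℂ) := Set.pi Set.univ (fun _ : Fin m => Metric.closedBall (0:ℂ) r)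
    with hK
  have hKc : IsCompact K := isCompact_univ_pi fun _ => isCompact_closedBall 0 r
  have hKD : K ⊆ D := by
    intro w hw
    rw [hD]
    intro i
    have h1 := hw i (Set.mem_univ i)
    rw [Metric.mem_closedBall, Complex.dist_eq, sub_zero] at h1
    exact lt_of_le_of_lt h1 hrR
  have hK0 : (0 : Fin m → ℂ) ∈ K := by
    intro i _
    simpa [Metric.mem_closedBall] using hr0
  set u : (Fin m → ℂ) → ℝ := fun v => f v * P v with hu
  have hPcont : Continuous P := by
    apply continuous_finset_prod
    intro i _
    apply Continuous.pow
    exact continuous_const.sub ((Complex.continuous_normSq.comp (continuous_apply i)).div_const _)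
  have hucont : ContinuousOn u K :=
    ((hf.continuousOn).mono hKD).mul (hPcont.continuousOn)
  obtain ⟨z, hzK, hzmax⟩ := hKc.exists_isMaxOn ⟨0, hK0⟩ hucont
  have hzD : z ∈ D := hKD hzK
  have hP0 : P 0 = 1 := by
    rw [hP]
    apply Finset.prod_eq_one
    intro i _
    norm_num
  have hu0 : u 0 = f 0 := by rw [hu]; simp [hP0]
  -- global maximality over D
  have hglobal : ∀ w ∈ D, u w ≤ u z := by
    intro w hw
    by_cases hwK : w ∈ K
    · exact hzmax hwK
    · have hex : ∃ i, r < ‖w i‖ := by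
        by_contra hcon
        push_neg at hcon
        exact hwK fun i _ => by
          rw [Metric.mem_closedBall, Complex.dist_eq, sub_zero]; exact hcon i
      obtain ⟨i, hi⟩ := hex
      have hai : 1 - Complex.normSq (w i) / R ^ 2 < Real.sqrt ε / 2 := by
        rw [← hr2]
        have h1 : r ^ 2 < Complex.normSq (w i) := by
          rw [← Complex.sq_norm]
          exact pow_lt_pow_left₀ hi hr0 (by norm_num)
        have h2 : r ^ 2 / R ^ 2 < Complex.normSq (w i) / R ^ 2 := by gcongr
        exact sub_lt_sub_left h2 1
      have hPw : P w ≤ (1 - Complex.normSq (w i) / R ^ 2) ^ 2 := by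
        have hPw' : P w = ∏ j : Fin m, (1 - Complex.normSq (w j) / R ^ 2) ^ 2 := rfl
        rw [hPw', ← Finset.mul_prod_erase _ _ (Finset.mem_univ i)]
        apply mul_le_of_le_one_right (sq_nonneg _)
        apply Finset.prod_le_one
        · intro j _; exact sq_nonneg _
        · intro j hj
          have h1 := haD w hw j
          have h2 := haD1 w hw j
          nlinarith
      have hsq : (1 - Complex.normSq (w i) / R ^ 2) ^ 2 < ε / 4 := by
        have h0 : 0 ≤ 1 - Complex.normSq (w i) / R ^ 2 := le_of_lt (haD w hw i)
        have := pow_lt_pow_left₀ hai h0 (n := 2) (by norm_num)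
        have hεsq : Real.sqrt ε ^ 2 = ε := Real.sq_sqrt (le_of_lt hε0)
        nlinarith
      have huw : u w < f 0 := by
        have h1 : u w ≤ M * P w := by
          rw [hu]
          apply mul_le_mul_of_nonneg_right (hM w hw) (le_of_lt (hPpos w hw))
        have h2 : M * P w < M * (ε / 4) := by
          apply mul_lt_mul_of_pos_left _ hM0
          exact lt_of_le_of_lt hPw hsq
        have h3 : M * (ε / 4) = f 0 / 4 := by
          rw [hεdef]; field_simp
        linarith
      have h6 : f 0 ≤ u z := by rw [← hu0]; exact hzmax hK0
      exact le_of_lt (lt_of_lt_of_le huw h6)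
  have huzpos : 0 < u z := by
    calc (0:ℝ) < f 0 := hf0
    _ = u 0 := hu0.symm
    _ ≤ u z := hzmax hK0
  -- local max of g at z
  have hgmax : IsLocalMax g z := by
    filter_upwards [hDopen.mem_nhds hzD] with v hv
    rw [hgu v hv, hgu z hzD]
    apply Real.log_le_log (mul_pos (hpos v hv) (hPpos v hv))
    exact hglobal v hv
  -- smoothness at z
  have hnqz : ∀ j, Complex.normSq (z j) < R ^ 2 := hnq z hzD
  have hLcd : ContDiffAt ℝ 2 (Lfun R m) z := my_contDiffAt_Lfun hR hnqz
  have hlogf : ContDiffAt ℝ 2 (fun v => Real.log (f v)) z := by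
    have h1 : ContDiffAt ℝ 2 f z := hf.contDiffAt (hDopen.mem_nhds hzD)
    exact h1.log (ne_of_gt (hpos z hzD))
  have hgcd : ContDiffAt ℝ 2 g z := hlogf.sub hLcd
  -- key directional comparison
  have hkey : ∀ e : Fin m → ℂ,
      deriv (deriv (fun t : ℝ => Real.log (f (z + t • e)))) 0
        ≤ deriv (deriv (fun t : ℝ => Lfun R m (z + t • e))) 0 := by
    intro e
    have h0 : z + (0:ℝ) • e = z := by simp
    have hlinecd : ContDiff ℝ 2 (fun t : ℝ => z + t • e) := my_contDiff_line z e
    have hgcd' : ContDiffAt ℝ 2 g (z + (0:ℝ) • e) := by rw [h0]; exact hgcd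
    have hφ : ContDiffAt ℝ 2 (fun t : ℝ => g (z + t • e)) 0 :=
      by have h := ContDiffAt.comp 0 hgcd' hlinecd.contDiffAt; exact h
    have hLcd' : ContDiffAt ℝ 2 (Lfun R m) (z + (0:ℝ) • e) := by rw [h0]; exact hLcd
    have hχ : ContDiffAt ℝ 2 (fun t : ℝ => Lfun R m (z + t • e)) 0 := by
      have hcomp := hLcd'.comp (x := (0:ℝ)) hlinecd.contDiffAt
      exact hcomp
    have hdecomp : (fun t : ℝ => Real.log (f (z + t • e)))
        = fun t => g (z + t • e) + Lfun R m (z + t • e) := by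
      funext t
      rw [hg]
      ring
    rw [hdecomp, my_deriv2_add hφ hχ]
    have hlmax : IsLocalMax (fun t : ℝ => g (z + t • e)) 0 := by
      have hcont : Tendsto (fun t : ℝ => z + t • e) (𝓝 0) (𝓝 z) := by
        have hcc : Continuous fun t : ℝ => z + t • e :=
          continuous_const.add (continuous_id.smul continuous_const)
        have := hcc.tendsto 0
        simpa using this
      have h1 : ∀ᶠ t in 𝓝 (0:ℝ), g (z + t • e) ≤ g z := hcont.eventually hgmax
      have h2 : g z = g (z + (0:ℝ) • e) := by rw [h0]
      rw [IsLocalMax, IsMaxFilter]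
      simpa [← h2] using h1
    have := my_secondDeriv_nonpos_of_localMax hφ hlmax
    linarith
  -- assemble the laplacian comparison
  have hlap : lap (fun v => Real.log (f v)) z ≤ lap (Lfun R m) z := by
    rw [my_lap_eq hlogf, my_lap_eq hLcd]
    exact Finset.sum_le_sum fun i _ => add_le_add (hkey _) (hkey _)
  have hlapL : lap (Lfun R m) z
      = ∑ i : Fin m, 8 / (R ^ 2 * (1 - Complex.normSq (z i) / R ^ 2) ^ 2) :=
    my_lap_Lfun hR hnqz
  -- bound the sum by (8 m / R²) ψ z
  have hterm : ∀ i : Fin m,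
      8 / (R ^ 2 * (1 - Complex.normSq (z i) / R ^ 2) ^ 2) ≤ 8 / R ^ 2 * ψ z := by
    intro i
    have hsingle : (1 - Complex.normSq (z i) / R ^ 2)⁻¹ ^ 2 ≤ ψ z := by
      rw [hψ' z]
      have hone : ∀ j : Fin m, 1 ≤ (1 - Complex.normSq (z j) / R ^ 2)⁻¹ ^ 2 := by
        intro j
        have h1 := haD z hzD j
        have h2 := haD1 z hzD j
        have h3 : 1 ≤ (1 - Complex.normSq (z j) / R ^ 2)⁻¹ := (one_le_inv₀ h1).mpr h2
        calc (1:ℝ) = 1 ^ 2 := by norm_num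
        _ ≤ (1 - Complex.normSq (z j) / R ^ 2)⁻¹ ^ 2 := by
            apply pow_le_pow_left₀ (by norm_num) h3
      rw [← Finset.mul_prod_erase _ _ (Finset.mem_univ i)]
      have hQ : 1 ≤ ∏ j ∈ Finset.univ.erase i, (1 - Complex.normSq (z j) / R ^ 2)⁻¹ ^ 2 := by
        have h1 : ∏ _j ∈ Finset.univ.erase i, (1:ℝ)
            ≤ ∏ j ∈ Finset.univ.erase i, (1 - Complex.normSq (z j) / R ^ 2)⁻¹ ^ 2 :=
          Finset.prod_le_prod (fun j _ => zero_le_one) (fun j _ => hone j)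
        rwa [Finset.prod_const_one] at h1
      have hnn : 0 ≤ (1 - Complex.normSq (z i) / R ^ 2)⁻¹ ^ 2 := sq_nonneg _
      exact le_mul_of_one_le_right hnn hQ
    have heq : 8 / (R ^ 2 * (1 - Complex.normSq (z i) / R ^ 2) ^ 2)
        = 8 / R ^ 2 * (1 - Complex.normSq (z i) / R ^ 2)⁻¹ ^ 2 := by
      rw [inv_pow]
      field_simp
    rw [heq]
    apply mul_le_mul_of_nonneg_left hsingle (by positivity)
  have hfinal : c * f z ≤ 8 * m / R ^ 2 * ψ z := by
    have h1 := hineq z hzD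
    have h2 : lap (Lfun R m) z ≤ m * (8 / R ^ 2 * ψ z) := by
      rw [hlapL]
      calc ∑ i : Fin m, 8 / (R ^ 2 * (1 - Complex.normSq (z i) / R ^ 2) ^ 2)
          ≤ ∑ _i : Fin m, 8 / R ^ 2 * ψ z := Finset.sum_le_sum fun i _ => hterm i
      _ = m * (8 / R ^ 2 * ψ z) := by
          rw [Finset.sum_const, Finset.card_univ, Fintype.card_fin, nsmul_eq_mul]
    calc c * f z ≤ lap (fun v => Real.log (f v)) z := h1
    _ ≤ lap (Lfun R m) z := hlap
    _ ≤ m * (8 / R ^ 2 * ψ z) := h2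
    _ = 8 * m / R ^ 2 * ψ z := by ring
  -- conclude: u z ≤ 8 m / (c R²)
  have huz : u z ≤ 8 * m / (c * R ^ 2) := by
    have hPz := hPpos z hzD
    have hψPz := hψP z hzD
    have h1 : c * f z * P z ≤ 8 * m / R ^ 2 * ψ z * P z :=
      mul_le_mul_of_nonneg_right hfinal (le_of_lt hPz)
    have h2 : 8 * (m:ℝ) / R ^ 2 * ψ z * P z = 8 * m / R ^ 2 := by
      rw [mul_assoc, hψPz, mul_one]
    rw [h2] at h1
    have h3 : c * u z ≤ 8 * m / R ^ 2 := by
      rw [hu]; calc c * (f z * P z) = c * f z * P z := by ring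
      _ ≤ 8 * m / R ^ 2 := h1
    have h4 : u z ≤ 8 * m / R ^ 2 / c := by
      rw [le_div_iff₀ hc]
      calc u z * c = c * u z := by ring
      _ ≤ 8 * m / R ^ 2 := h3
    calc u z ≤ 8 * m / R ^ 2 / c := h4
    _ = 8 * m / (c * R ^ 2) := by rw [div_div, mul_comm (R ^ 2) c]
  have hmain : ∀ w ∈ D, f w ≤ 8 * m / (c * R ^ 2) * ψ w := by
    intro w hw
    have h1 : f w * P w ≤ 8 * m / (c * R ^ 2) := le_trans (hglobal w hw) huz
    have h2 : f w = f w * P w * ψ w := by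
      rw [mul_assoc, mul_comm (P w), hψP w hw, mul_one]
    rw [h2]
    exact mul_le_mul_of_nonneg_right h1 (le_of_lt (hψpos w hw))
  refine ⟨hmain, ?_⟩
  have h5 := hmain 0 h0D
  have hψ0 : ψ 0 = 1 := by
    rw [hψ]
    apply Finset.prod_eq_one
    intro i _
    norm_num
  rw [hψ0, mul_one] at h5
  exact h5
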